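/- Let H be an n×n real symmetric positive definite matrix, let α < 0, and let k₂ > 0. Then for all z, g ∈ ℝⁿ with z ≠ g, zᵀ(z − g) / ‖H⁻¹(z − g)‖^{α} ≤ (k₂/(2−α)) · λ_max(H)^{2−α} · ‖z‖^{2−α} + ((1−α)/(2−α)) · k₂^{−1/(1−α)} · λ_min(H)^{α−2} · ‖z − g‖^{2−α}. -/

import Mathlib

/-!
With `w = z - g`, Cauchy–Schwarz and the bound `‖H⁻¹ w‖ ≤ ‖w‖ / λ_min` (which comes from
`λ_min ‖v‖ ≤ ‖H v‖`, read off in an orthonormal eigenbasis of `H`) reduce the left-hand side to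
`(λ_min ‖z‖) · (‖w‖ / λ_min)^(1-α)`. Young's inequality with the conjugate exponents `2 - α` and
`(2 - α)/(1 - α)`, weighted by `k₂`, splits this product into the two terms on the right, and
`λ_min ≤ λ_max` finishes.
-/

open scoped InnerProductSpace

/-- Matrix-vector multiplication viewed as a map on Euclidean space. -/
noncomputable def mulVecE {n : ℕ} (H : Matrix (Fin n) (Fin n) ℝ)
    (w : EuclideanSpace ℝ (Fin n)) : EuclideanSpace ℝ (Fin n) :=
  (EuclideanSpace.equiv (Fin n) ℝ).symm (H.mulVec (EuclideanSpace.equiv (Fin n) ℝ w))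

open Matrix

theorem LinearMap.IsSymmetric.mul_norm_le_norm_apply {ι E : Type*} [Fintype ι]
    [NormedAddCommGroup E] [InnerProductSpace ℝ E] {T : E →ₗ[ℝ] E} (hT : T.IsSymmetric)
    (b : OrthonormalBasis ι ℝ E) {μ : ι → ℝ} (hb : ∀ i, T (b i) = μ i • b i)
    {c : ℝ} (hc : 0 ≤ c) (hμ : ∀ i, c ≤ μ i) (v : E) :
    c * ‖v‖ ≤ ‖T v‖ := by
  have hsq : (c * ‖v‖) ^ 2 ≤ ‖T v‖ ^ 2 := by
    rw [mul_pow, ← b.sum_sq_inner_right v, ← b.sum_sq_inner_right (T v), Finset.mul_sum]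
    refine Finset.sum_le_sum fun i _ => ?_
    rw [← hT, hb, real_inner_smul_left, mul_pow]
    gcongr
    exact hμ i
  exact le_of_pow_le_pow_left₀ two_ne_zero (norm_nonneg _) hsq

theorem mulVecE_eq_toEuclideanLin {n : ℕ} (H : Matrix (Fin n) (Fin n) ℝ)
    (w : EuclideanSpace ℝ (Fin n)) : mulVecE H w = H.toEuclideanLin w := rfl

theorem mulVecE_mulVecE {n : ℕ} (A B : Matrix (Fin n) (Fin n) ℝ)
    (w : EuclideanSpace ℝ (Fin n)) : mulVecE A (mulVecE B w) = mulVecE (A * B) w := by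
  simp [mulVecE_eq_toEuclideanLin]

theorem Matrix.IsHermitian.mul_norm_le_norm_mulVecE {n : ℕ} {H : Matrix (Fin n) (Fin n) ℝ}
    (hH : H.IsHermitian) {c : ℝ} (hc : 0 ≤ c) (hmin : ∀ i, c ≤ hH.eigenvalues i)
    (v : EuclideanSpace ℝ (Fin n)) : c * ‖v‖ ≤ ‖mulVecE H v‖ := by
  refine (isSymmetric_toEuclideanLin_iff.mpr hH).mul_norm_le_norm_apply
    hH.eigenvectorBasis (fun i => ?_) hc hmin v
  ext1
  simp [toLpLin_apply, hH.mulVec_eigenvectorBasis i]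

theorem Matrix.PosDef.norm_mulVecE_inv_le {n : ℕ} {H : Matrix (Fin n) (Fin n) ℝ}
    (hH : H.PosDef) {c : ℝ} (hc : 0 < c) (hmin : ∀ i, c ≤ hH.1.eigenvalues i)
    (w : EuclideanSpace ℝ (Fin n)) : ‖mulVecE H⁻¹ w‖ ≤ c⁻¹ * ‖w‖ := by
  have hdet : IsUnit H.det := isUnit_iff_ne_zero.mpr hH.det_pos.ne'
  rw [le_inv_mul_iff₀ hc]
  calc c * ‖mulVecE H⁻¹ w‖ ≤ ‖mulVecE H (mulVecE H⁻¹ w)‖ :=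
        hH.1.mul_norm_le_norm_mulVecE hc.le hmin _
    _ = ‖w‖ := by rw [mulVecE_mulVecE, mul_nonsing_inv _ hdet, mulVecE_eq_toEuclideanLin]; simp

theorem Real.mul_rpow_sub_one_le {a b p k : ℝ} (ha : 0 ≤ a) (hb : 0 ≤ b) (hp : 1 < p)
    (hk : 0 < k) :
    a * b ^ (p - 1) ≤ k / p * a ^ p + (p - 1) / p * k ^ (-(1 / (p - 1))) * b ^ p := by
  have hp0 : 0 < p := by linarith
  have hp1 : 0 < p - 1 := by linarith
  have hpq : p.HolderConjugate (p / (p - 1)) := by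
    rw [Real.holderConjugate_iff]
    exact ⟨hp, by field_simp; ring⟩
  have hk' : 0 < k ^ (1 / p) := Real.rpow_pos_of_pos hk _
  have young := Real.young_inequality_of_nonneg (mul_nonneg hk'.le ha)
    (mul_nonneg (inv_nonneg.mpr hk'.le) (Real.rpow_nonneg hb (p - 1))) hpq
  have hA : (k ^ (1 / p) * a) ^ p = k * a ^ p := by
    rw [Real.mul_rpow hk'.le ha, ← Real.rpow_mul hk.le, one_div_mul_cancel hp0.ne',
      Real.rpow_one]
  have hB : ((k ^ (1 / p))⁻¹ * b ^ (p - 1)) ^ (p / (p - 1))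
      = k ^ (-(1 / (p - 1))) * b ^ p := by
    rw [Real.mul_rpow (inv_nonneg.mpr hk'.le) (Real.rpow_nonneg hb _),
      Real.inv_rpow hk'.le, ← Real.rpow_mul hk.le, ← Real.rpow_mul hb,
      ← Real.rpow_neg hk.le]
    congr 2 <;> field_simp
  calc a * b ^ (p - 1) = (k ^ (1 / p) * a) * ((k ^ (1 / p))⁻¹ * b ^ (p - 1)) := by
        field_simp
    _ ≤ _ := young
    _ = _ := by rw [hA, hB]; field_simp

theorem real_inner_div_rpow_le {E : Type*} [NormedAddCommGroup E] [InnerProductSpace ℝ E]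
    (x w : E) {r c α : ℝ} (hα : α ≤ 0) (hr : 0 ≤ r) (hc : 0 < c) (hrw : r ≤ c⁻¹ * ‖w‖) :
    ⟪x, w⟫_ℝ / r ^ α ≤ c * ‖x‖ * (c⁻¹ * ‖w‖) ^ (1 - α) := by
  have hs : 0 ≤ c⁻¹ * ‖w‖ := by positivity
  calc ⟪x, w⟫_ℝ / r ^ α = ⟪x, w⟫_ℝ * r ^ (-α) := by
        rw [Real.rpow_neg hr, div_eq_mul_inv]
    _ ≤ ‖x‖ * ‖w‖ * (c⁻¹ * ‖w‖) ^ (-α) := by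
        gcongr
        · exact real_inner_le_norm x w
        · linarith
    _ = c * ‖x‖ * (c⁻¹ * ‖w‖) ^ (1 - α) := by
        rw [sub_eq_add_neg, Real.rpow_add' hs (by linarith), Real.rpow_one]
        field_simp

theorem stmt7_general (n : ℕ) (H : Matrix (Fin n) (Fin n) ℝ) (hH : H.PosDef)
    (lammin lammax : ℝ)
    (hminmem : ∃ i, hH.1.eigenvalues i = lammin)
    (hmin : ∀ i, lammin ≤ hH.1.eigenvalues i)
    (hmax : ∀ i, hH.1.eigenvalues i ≤ lammax)
    (α : ℝ) (hα : α < 0) (k₂ : ℝ) (hk₂ : 0 < k₂)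
    (z g : EuclideanSpace ℝ (Fin n)) :
    ⟪z, z - g⟫_ℝ / ‖mulVecE H⁻¹ (z - g)‖ ^ α ≤
      k₂ / (2 - α) * lammax ^ (2 - α) * ‖z‖ ^ (2 - α) +
        (1 - α) / (2 - α) * k₂ ^ (-(1 / (1 - α))) * lammin ^ (α - 2) * ‖z - g‖ ^ (2 - α) := by
  obtain ⟨i, rfl⟩ := hminmem
  have hpos : 0 < hH.1.eigenvalues i := hH.eigenvalues_pos i
  have young := Real.mul_rpow_sub_one_le (mul_nonneg hpos.le (norm_nonneg z))
    (mul_nonneg (inv_nonneg.mpr hpos.le) (norm_nonneg (z - g))) (by linarith : 1 < 2 - α) hk₂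
  rw [show 2 - α - 1 = 1 - α by ring] at young
  have hz : (hH.1.eigenvalues i * ‖z‖) ^ (2 - α) ≤ lammax ^ (2 - α) * ‖z‖ ^ (2 - α) := by
    rw [← Real.mul_rpow (hpos.le.trans (hmax i)) (norm_nonneg z)]
    gcongr
    · linarith
    · exact hmax i
  have hw : ((hH.1.eigenvalues i)⁻¹ * ‖z - g‖) ^ (2 - α)
      = hH.1.eigenvalues i ^ (α - 2) * ‖z - g‖ ^ (2 - α) := by
    rw [Real.mul_rpow (inv_nonneg.mpr hpos.le) (norm_nonneg _), Real.inv_rpow hpos.le,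
      ← Real.rpow_neg hpos.le, neg_sub]
  calc _ ≤ _ := real_inner_div_rpow_le z (z - g) hα.le (norm_nonneg _) hpos
          (hH.norm_mulVecE_inv_le hpos hmin (z - g))
    _ ≤ _ := young
    _ ≤ _ := by
      have hc : 0 ≤ k₂ / (2 - α) := div_nonneg hk₂.le (by linarith)
      rw [hw]
      linear_combination (k₂ / (2 - α)) * hz

theorem stmt7 (n : ℕ) (H : Matrix (Fin n) (Fin n) ℝ) (hH : H.PosDef)
    (lammin lammax : ℝ)
    (hminmem : ∃ i, hH.1.eigenvalues i = lammin)
    (hmin : ∀ i, lammin ≤ hH.1.eigenvalues i)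
    (hmaxmem : ∃ i, hH.1.eigenvalues i = lammax)
    (hmax : ∀ i, hH.1.eigenvalues i ≤ lammax)
    (α : ℝ) (hα : α < 0) (k₂ : ℝ) (hk₂ : 0 < k₂)
    (z g : EuclideanSpace ℝ (Fin n)) (hzg : z ≠ g) :
    ⟪z, z - g⟫_ℝ / ‖mulVecE H⁻¹ (z - g)‖ ^ α ≤
      k₂ / (2 - α) * lammax ^ (2 - α) * ‖z‖ ^ (2 - α) +
        (1 - α) / (2 - α) * k₂ ^ (-(1 / (1 - α))) * lammin ^ (α - 2) * ‖z - g‖ ^ (2 - α) :=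
  stmt7_general n H hH lammin lammax hminmem hmin hmax α hα k₂ hk₂ z g
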